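/- arXiv:1701.07351 — 2 statements merged into one kernel-verified Lean document; each statement's English description precedes it below -/
import Mathlib

section
/- Let D be a DAG on V with initial nodes V₀ and χ the tail dependence matrix of a recursive max-weighted model on D. For i ∈ V set V₀ⁱ = {k ∈ V₀ : χ(k,i) > 0}. Then every permutation σ of V satisfying (i) σ(j) < σ(i) whenever |V₀ʲ| < |V₀ⁱ|, and (ii) σ(j) < σ(i) whenever |V₀ʲ| = |V₀ⁱ| and max_{k∈V₀ⁱ} χ(k,i) < max_{k∈V₀ʲ} χ(k,j), is a causal ordering of D (i.e., σ(j) < σ(i) for all i ∈ V and j ∈ an(i)). -/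
open Finset
open scoped Classical

/-- `anc E j i`: there is a directed path (length ≥ 1) from `j` to `i`, i.e. `j` is a
strict ancestor of `i` in the directed graph with edge relation `E`. -/
def anc {d : ℕ} (E : Fin d → Fin d → Prop) (j i : Fin d) : Prop :=
  Relation.TransGen E j i

/-- `Anc E j i`: `j` is an ancestor of `i`, including `j = i`. -/
def Anc {d : ℕ} (E : Fin d → Fin d → Prop) (j i : Fin d) : Prop :=
  j = i ∨ Relation.TransGen E j i

/-- The tail dependence coefficient associated to a (standardized) max-linear
coefficient matrix `B`: `χ(i,j) = ∑_{k ∈ An(i) ∩ An(j)} min (B k i) (B k j)`. -/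
noncomputable def tdc {d : ℕ} (E : Fin d → Fin d → Prop)
    (B : Matrix (Fin d) (Fin d) ℝ) (i j : Fin d) : ℝ :=
  ∑ k ∈ Finset.univ.filter (fun k => Anc E k i ∧ Anc E k j), min (B k i) (B k j)

/-!
Along a path `j → ⋯ → i` the set of initial ancestors can only grow, `V₀ʲ ⊆ V₀ⁱ`; if it grows,
condition (i) applies. Otherwise the two sets coincide. For an initial node `k` one has
`χ(k, i) = min (b̄ₖₖ, b̄ₖᵢ)`. Column `i` carries mass `b̄ⱼᵢ / b̄ⱼⱼ` on `An(j)` by the max-weighted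
property, and mass `b̄ᵢᵢ > 0` at `i`, so `b̄ⱼᵢ < b̄ⱼⱼ` and hence `b̄ₖᵢ = b̄ₖⱼ · b̄ⱼᵢ / b̄ⱼⱼ < b̄ₖⱼ`.
Thus `χ(k, i) < χ(k, j)` on the common nonempty set, and condition (ii) applies to the maxima.
-/

section Graph

variable {d : ℕ} {E : Fin d → Fin d → Prop}

theorem Anc_trans {a b c : Fin d} (hab : Anc E a b) (hbc : Anc E b c) : Anc E a c := by
  rcases hab with rfl | hab
  · exact hbc
  · rcases hbc with rfl | hbc
    · exact Or.inr hab
    · exact Or.inr (hab.trans hbc)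

theorem not_Anc_of_anc (hacyc : ∀ i, ¬ anc E i i) {j i : Fin d} (hji : anc E j i) :
    ¬ Anc E i j := by
  rintro (rfl | hij)
  · exact hacyc _ hji
  · exact hacyc i (hij.trans hji)

theorem Anc_iff_eq_of_initial {k : Fin d} (hk : ∀ m, ¬ E m k) (m : Fin d) :
    Anc E m k ↔ m = k := by
  refine ⟨?_, fun h => Or.inl h⟩
  rintro (rfl | hmk)
  · rfl
  · rcases hmk with hmk | ⟨-, hmk⟩ <;> exact absurd hmk (hk _)

theorem exists_initial_Anc (hacyc : ∀ i, ¬ anc E i i) (i : Fin d) :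
    ∃ k, (∀ m, ¬ E m k) ∧ Anc E k i := by
  have : IsTrans (Fin d) (anc E) := ⟨fun _ _ _ => Relation.TransGen.trans⟩
  have : Std.Irrefl (anc E) := ⟨hacyc⟩
  obtain ⟨k, hki, hmin⟩ := (Finite.wellFounded_of_trans_of_irrefl (anc E)).has_min
    {k | Anc E k i} ⟨i, Or.inl rfl⟩
  exact ⟨k, fun m hmk => hmin m (Anc_trans (Or.inr (.single hmk)) hki) (.single hmk), hki⟩

-- The paper's `V₀ⁱ`, see `filter_initial_tdc_pos_eq`.
noncomputable def initialAncestors (E : Fin d → Fin d → Prop) (i : Fin d) : Finset (Fin d) :=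
  univ.filter fun k => (∀ m, ¬ E m k) ∧ Anc E k i

theorem mem_initialAncestors {k i : Fin d} :
    k ∈ initialAncestors E i ↔ (∀ m, ¬ E m k) ∧ Anc E k i := by
  simp [initialAncestors]

theorem initialAncestors_mono {j i : Fin d} (hji : Anc E j i) :
    initialAncestors E j ⊆ initialAncestors E i := fun _ hk => by
  rw [mem_initialAncestors] at hk ⊢
  exact ⟨hk.1, Anc_trans hk.2 hji⟩

theorem initialAncestors_nonempty (hacyc : ∀ i, ¬ anc E i i) (i : Fin d) :
    (initialAncestors E i).Nonempty :=
  let ⟨k, hk⟩ := exists_initial_Anc hacyc i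
  ⟨k, mem_initialAncestors.mpr hk⟩

end Graph

section Coefficients

variable {d : ℕ} {E : Fin d → Fin d → Prop} {B : Matrix (Fin d) (Fin d) ℝ}

theorem tdc_of_initial {k i : Fin d} (hk : ∀ m, ¬ E m k) :
    tdc E B k i = if Anc E k i then min (B k k) (B k i) else 0 := by
  have hAn : univ.filter (fun m => Anc E m k ∧ Anc E m i) =
      if Anc E k i then {k} else ∅ := by
    ext m
    split_ifs with hki <;> simp only [mem_filter, mem_univ, true_and, Anc_iff_eq_of_initial hk,
      mem_singleton, notMem_empty, iff_false, and_iff_left_iff_imp, not_and] <;> rintro rfl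
    exacts [hki, hki]
  unfold tdc
  rw [hAn]
  split_ifs <;> simp

theorem filter_initial_tdc_pos_eq (hsgn : ∀ j i, 0 < B j i ↔ Anc E j i) (i : Fin d) :
    univ.filter (fun k => (∀ m, ¬ E m k) ∧ 0 < tdc E B k i) = initialAncestors E i := by
  ext k
  rw [mem_initialAncestors, mem_filter, and_iff_right (mem_univ k)]
  refine and_congr_right fun hk => ?_
  rw [tdc_of_initial hk]
  split_ifs with hki
  · exact iff_of_true (lt_min ((hsgn k k).2 (Or.inl rfl)) ((hsgn k i).2 hki)) hki
  · exact iff_of_false (lt_irrefl 0) hki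

theorem sum_Anc_eq_div_of_anc (hsgn : ∀ j i, 0 < B j i ↔ Anc E j i)
    (hcol : ∀ i, ∑ k ∈ univ.filter (fun k => Anc E k i), B k i = 1)
    (hmw : ∀ i k j, anc E k i → anc E j k → B j i = B j k * B k i / B k k)
    {j i : Fin d} (hji : anc E j i) :
    ∑ m ∈ univ.filter (fun m => Anc E m j), B m i = B j i / B j j := by
  have hBjj : B j j ≠ 0 := ((hsgn j j).2 (Or.inl rfl)).ne'
  calc ∑ m ∈ univ.filter (fun m => Anc E m j), B m i
      = ∑ m ∈ univ.filter (fun m => Anc E m j), B m j * (B j i / B j j) := by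
        refine sum_congr rfl fun m hm => ?_
        rcases (mem_filter.mp hm).2 with rfl | hmj
        · field_simp
        · rw [hmw i j m hji hmj]; ring
    _ = B j i / B j j := by rw [← sum_mul, hcol j, one_mul]

theorem lt_diag_of_anc (hacyc : ∀ i, ¬ anc E i i) (hsgn : ∀ j i, 0 < B j i ↔ Anc E j i)
    (hcol : ∀ i, ∑ k ∈ univ.filter (fun k => Anc E k i), B k i = 1)
    (hmw : ∀ i k j, anc E k i → anc E j k → B j i = B j k * B k i / B k k)
    {j i : Fin d} (hji : anc E j i) : B j i < B j j := by
  have hi : i ∉ univ.filter (fun m => Anc E m j) := by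
    simpa using not_Anc_of_anc hacyc hji
  have hsub : insert i (univ.filter (fun m => Anc E m j)) ⊆ univ.filter (fun m => Anc E m i) := by
    intro m hm
    rcases mem_insert.mp hm with rfl | hm
    · exact mem_filter.2 ⟨mem_univ _, Or.inl rfl⟩
    · simpa using Anc_trans (mem_filter.mp hm).2 (Or.inr hji)
  have hle : ∑ m ∈ insert i (univ.filter (fun m => Anc E m j)), B m i ≤ 1 := by
    rw [← hcol i]
    exact sum_le_sum_of_subset_of_nonneg hsub fun m hm _ => ((hsgn m i).2 (mem_filter.mp hm).2).le
  rw [sum_insert hi, sum_Anc_eq_div_of_anc hsgn hcol hmw hji] at hle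
  have hBii : 0 < B i i := (hsgn i i).2 (Or.inl rfl)
  rw [← div_lt_one ((hsgn j j).2 (Or.inl rfl))]
  linarith

theorem lt_of_anc_of_Anc (hacyc : ∀ i, ¬ anc E i i) (hsgn : ∀ j i, 0 < B j i ↔ Anc E j i)
    (hcol : ∀ i, ∑ k ∈ univ.filter (fun k => Anc E k i), B k i = 1)
    (hmw : ∀ i k j, anc E k i → anc E j k → B j i = B j k * B k i / B k k)
    {k j i : Fin d} (hji : anc E j i) (hkj : Anc E k j) : B k i < B k j := by
  have hji' := lt_diag_of_anc hacyc hsgn hcol hmw hji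
  rcases hkj with rfl | hkj
  · exact hji'
  · have hratio : B j i / B j j < 1 := (div_lt_one ((hsgn j j).2 (Or.inl rfl))).2 hji'
    calc B k i = B k j * (B j i / B j j) := by rw [hmw i j k hji hkj]; ring
      _ < B k j := mul_lt_of_lt_one_right ((hsgn k j).2 (Or.inr hkj)) hratio

theorem tdc_lt_tdc_of_anc (hacyc : ∀ i, ¬ anc E i i) (hsgn : ∀ j i, 0 < B j i ↔ Anc E j i)
    (hcol : ∀ i, ∑ k ∈ univ.filter (fun k => Anc E k i), B k i = 1)
    (hmw : ∀ i k j, anc E k i → anc E j k → B j i = B j k * B k i / B k k)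
    {k j i : Fin d} (hk : ∀ m, ¬ E m k) (hkj : Anc E k j) (hji : anc E j i) :
    tdc E B k i < tdc E B k j := by
  have hki : anc E k i := by
    rcases hkj with rfl | hkj
    exacts [hji, hkj.trans hji]
  rw [tdc_of_initial hk, if_pos (show Anc E k i from Or.inr hki), tdc_of_initial hk, if_pos hkj]
  exact (min_le_right _ _).trans_lt (lt_min (lt_diag_of_anc hacyc hsgn hcol hmw hki)
    (lt_of_anc_of_Anc hacyc hsgn hcol hmw hji hkj))

end Coefficients

theorem Finset.sSup_image_lt_sSup_image {ι α : Type*} [ConditionallyCompleteLinearOrder α]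
    {s : Finset ι} (hs : s.Nonempty) {f g : ι → α} (hfg : ∀ k ∈ s, f k < g k) :
    sSup (f '' ↑s) < sSup (g '' ↑s) := by
  obtain ⟨k, hk, hfk⟩ := ((coe_nonempty.2 hs).image f).csSup_mem (s.finite_toSet.image f)
  rw [← hfk]
  exact (hfg k hk).trans_le (le_csSup (s.finite_toSet.image g).bddAbove ⟨k, hk, rfl⟩)

theorem stmt14_general {d : ℕ} (E : Fin d → Fin d → Prop)
    (hacyc : ∀ i, ¬ anc E i i)
    (B : Matrix (Fin d) (Fin d) ℝ)
    (hsgn : ∀ j i, 0 < B j i ↔ Anc E j i)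
    (hcol : ∀ i, ∑ k ∈ Finset.univ.filter (fun k => Anc E k i), B k i = 1)
    (hmw : ∀ i k j, anc E k i → anc E j k → B j i = B j k * B k i / B k k)
    (V0i : Fin d → Finset (Fin d))
    (hV0i : ∀ i, V0i i = Finset.univ.filter
      (fun k => (∀ m, ¬ E m k) ∧ 0 < tdc E B k i))
    (σ : Equiv.Perm (Fin d))
    (h1 : ∀ i j, (V0i j).card < (V0i i).card → σ j < σ i)
    (h2 : ∀ i j, (V0i j).card = (V0i i).card →
      sSup ((fun k => tdc E B k i) '' ↑(V0i i)) <
        sSup ((fun k => tdc E B k j) '' ↑(V0i j)) → σ j < σ i) :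
    ∀ i j, anc E j i → σ j < σ i := by
  obtain rfl : V0i = initialAncestors E :=
    funext fun i => (hV0i i).trans (filter_initial_tdc_pos_eq hsgn i)
  intro i j hji
  have hsub := initialAncestors_mono (E := E) (Or.inr hji)
  rcases (card_le_card hsub).lt_or_eq with hlt | hcard
  · exact h1 i j hlt
  · refine h2 i j hcard ?_
    rw [← eq_of_subset_of_card_le hsub hcard.ge]
    exact sSup_image_lt_sSup_image (initialAncestors_nonempty hacyc j) fun k hk =>
      tdc_lt_tdc_of_anc hacyc hsgn hcol hmw (mem_initialAncestors.mp hk).1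
        (mem_initialAncestors.mp hk).2 hji

theorem stmt14 {d : ℕ} (E : Fin d → Fin d → Prop)
    (hacyc : ∀ i, ¬ anc E i i)
    (B : Matrix (Fin d) (Fin d) ℝ)
    (hnn : ∀ j i, 0 ≤ B j i)
    (hsgn : ∀ j i, 0 < B j i ↔ Anc E j i)
    (hcol : ∀ i, ∑ k ∈ Finset.univ.filter (fun k => Anc E k i), B k i = 1)
    (hmw : ∀ i k j, anc E k i → anc E j k → B j i = B j k * B k i / B k k)
    (V0i : Fin d → Finset (Fin d))
    (hV0i : ∀ i, V0i i = Finset.univ.filter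
      (fun k => (∀ m, ¬ E m k) ∧ 0 < tdc E B k i))
    (σ : Equiv.Perm (Fin d))
    (h1 : ∀ i j, (V0i j).card < (V0i i).card → σ j < σ i)
    (h2 : ∀ i j, (V0i j).card = (V0i i).card →
      sSup ((fun k => tdc E B k i) '' ↑(V0i i)) <
        sSup ((fun k => tdc E B k j) '' ↑(V0i j)) → σ j < σ i) :
    ∀ i j, anc E j i → σ j < σ i :=
  stmt14_general E hacyc B hsgn hcol hmw V0i hV0i σ h1 h2
end

section
/- Let B̄ and B̃ be standardized max-linear coefficient matrices of recursive max-linear models on DAGs D and D̃ on the same node set V, having the same tail dependence matrix χ. Denote by V₀, Ṽ₀ the initial nodes and by De, D̃e the descendant relations of D and D̃. Let φ: V₀ → Ṽ₀ be the unique bijection with χ(j, φ(j)) > 0 and χ(j, j̃) = 0 for j̃ ∈ Ṽ₀ \ {φ(j)}. Then for every j ∈ V₀: De(j) = D̃e(φ(j)), where De(j) and D̃e(φ(j)) include the node itself. -/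
open Finset
open scoped Classical

lemma Anc.refl' {d : ℕ} (E : Fin d → Fin d → Prop) (i : Fin d) : Anc E i i := Or.inl rfl

lemma Anc.trans' {d : ℕ} {E : Fin d → Fin d → Prop} {a b c : Fin d}
    (h1 : Anc E a b) (h2 : Anc E b c) : Anc E a c := by
  rcases h1 with rfl | h1
  · exact h2
  · rcases h2 with rfl | h2
    · exact Or.inr h1
    · exact Or.inr (h1.trans h2)

/-- An ancestor of an initial node is the node itself. -/
lemma anc_of_init {d : ℕ} {E : Fin d → Fin d → Prop} {j m : Fin d}
    (hj : ∀ k, ¬ E k j) (h : Anc E m j) : m = j := by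
  rcases h with rfl | h
  · rfl
  · rcases (Relation.TransGen.tail'_iff).1 h with ⟨b, _, hb⟩
    exact absurd hb (hj b)

/-- Positivity of the tail dependence coefficient characterizes common ancestors. -/
lemma tdc_pos_iff {d : ℕ} (E : Fin d → Fin d → Prop)
    (B : Matrix (Fin d) (Fin d) ℝ)
    (hnn : ∀ j i, 0 ≤ B j i) (hsgn : ∀ j i, 0 < B j i ↔ Anc E j i) (i j : Fin d) :
    0 < tdc E B i j ↔ ∃ m, Anc E m i ∧ Anc E m j := by
  constructor
  · intro h
    by_contra hc
    push_neg at hc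
    have : (Finset.univ.filter (fun k => Anc E k i ∧ Anc E k j)) = ∅ := by
      apply Finset.filter_false_of_mem
      intro x _ hx
      exact hc x hx.1 hx.2
    rw [tdc, this, Finset.sum_empty] at h
    exact lt_irrefl 0 h
  · rintro ⟨m, hm1, hm2⟩
    apply Finset.sum_pos'
    · intro x _
      exact le_min (hnn x i) (hnn x j)
    · refine ⟨m, Finset.mem_filter.2 ⟨Finset.mem_univ m, hm1, hm2⟩, ?_⟩
      exact lt_min ((hsgn m i).2 hm1) ((hsgn m j).2 hm2)

/-- Every node in a finite acyclic graph has an initial ancestor. -/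
lemma exists_init_anc {d : ℕ} (E : Fin d → Fin d → Prop)
    (hacyc : ∀ i, ¬ anc E i i) (m : Fin d) :
    ∃ j, (∀ k, ¬ E k j) ∧ Anc E j m := by
  classical
  generalize hn : (Finset.univ.filter (fun x => anc E x m)).card = n
  induction n using Nat.strong_induction_on generalizing m with
  | _ n ih =>
    by_cases hm : ∀ k, ¬ E k m
    · exact ⟨m, hm, Or.inl rfl⟩
    · push_neg at hm
      obtain ⟨k, hk⟩ := hm
      have hsub : (Finset.univ.filter (fun x => anc E x k)) ⊆
          (Finset.univ.filter (fun x => anc E x m)) := by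
        intro x hx
        rw [Finset.mem_filter] at hx ⊢
        exact ⟨hx.1, hx.2.tail hk⟩
      have hss : (Finset.univ.filter (fun x => anc E x k)) ⊂
          (Finset.univ.filter (fun x => anc E x m)) := by
        refine (Finset.ssubset_iff_of_subset hsub).2 ⟨k, ?_, ?_⟩
        · exact Finset.mem_filter.2 ⟨Finset.mem_univ k, Relation.TransGen.single hk⟩
        · intro hkk
          exact hacyc k ((Finset.mem_filter.1 hkk).2)
      have hcard : (Finset.univ.filter (fun x => anc E x k)).card < n :=
        hn ▸ Finset.card_lt_card hss
      obtain ⟨j, hj1, hj2⟩ := ih _ hcard k rfl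
      exact ⟨j, hj1, hj2.trans' (Or.inr (Relation.TransGen.single hk))⟩

theorem stmt15 {d : ℕ} (E Et : Fin d → Fin d → Prop)
    (hacyc : ∀ i, ¬ anc E i i) (hacyct : ∀ i, ¬ anc Et i i)
    (B Bt : Matrix (Fin d) (Fin d) ℝ)
    (hnn : ∀ j i, 0 ≤ B j i) (hnnt : ∀ j i, 0 ≤ Bt j i)
    (hsgn : ∀ j i, 0 < B j i ↔ Anc E j i)
    (hsgnt : ∀ j i, 0 < Bt j i ↔ Anc Et j i)
    (hcol : ∀ i, ∑ k ∈ Finset.univ.filter (fun k => Anc E k i), B k i = 1)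
    (hcolt : ∀ i, ∑ k ∈ Finset.univ.filter (fun k => Anc Et k i), Bt k i = 1)
    (hdiag : ∀ i j, i ≠ j → B j i < B j j)
    (hdiagt : ∀ i j, i ≠ j → Bt j i < Bt j j)
    (hchieq : ∀ i j, tdc E B i j = tdc Et Bt i j)
    (φ : Fin d → Fin d)
    (hbij : Set.BijOn φ {i | ∀ k, ¬ E k i} {i | ∀ k, ¬ Et k i})
    (hφ : ∀ j, (∀ k, ¬ E k j) → 0 < tdc E B j (φ j) ∧
      ∀ jt, (∀ k, ¬ Et k jt) → jt ≠ φ j → tdc E B j jt = 0) :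
    ∀ j, (∀ k, ¬ E k j) →
      {k : Fin d | Anc E j k} = {k : Fin d | Anc Et (φ j) k} := by
  intro j hj
  have hφinit : ∀ k, ¬ Et k (φ j) := hbij.mapsTo hj
  obtain ⟨hpos, huniq⟩ := hφ j hj
  -- φ j is an Et-ancestor of j
  have hAncφ : Anc Et (φ j) j := by
    have h1 : 0 < tdc Et Bt j (φ j) := (hchieq j (φ j)) ▸ hpos
    obtain ⟨m, hm1, hm2⟩ := (tdc_pos_iff Et Bt hnnt hsgnt j (φ j)).1 h1
    exact (anc_of_init hφinit hm2) ▸ hm1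
  ext k
  simp only [Set.mem_setOf_eq]
  constructor
  · intro h
    have h1 : 0 < tdc E B j k :=
      (tdc_pos_iff E B hnn hsgn j k).2 ⟨j, Anc.refl' E j, h⟩
    have h2 : 0 < tdc Et Bt j k := (hchieq j k) ▸ h1
    obtain ⟨m, hm1, hm2⟩ := (tdc_pos_iff Et Bt hnnt hsgnt j k).1 h2
    obtain ⟨jt, hjt1, hjt2⟩ := exists_init_anc Et hacyct m
    have hjtj : Anc Et jt j := hjt2.trans' hm1
    have hjtpos : 0 < tdc E B j jt := by
      have : 0 < tdc Et Bt j jt :=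
        (tdc_pos_iff Et Bt hnnt hsgnt j jt).2 ⟨jt, hjtj, Anc.refl' Et jt⟩
      exact (hchieq j jt) ▸ this
    have : jt = φ j := by
      by_contra hne
      exact absurd (huniq jt hjt1 hne) (ne_of_gt hjtpos)
    exact this ▸ (hjt2.trans' hm2)
  · intro h
    have h2 : 0 < tdc Et Bt j k :=
      (tdc_pos_iff Et Bt hnnt hsgnt j k).2 ⟨φ j, hAncφ, h⟩
    have h1 : 0 < tdc E B j k := (hchieq j k) ▸ h2
    obtain ⟨m, hm1, hm2⟩ := (tdc_pos_iff E B hnn hsgn j k).1 h1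
    exact (anc_of_init hj hm1) ▸ hm2
end
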